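/- Let L be a lattice generated by a three-element subset {a₁, a₂, a₃}, and let {i, j, k} = {1, 2, 3}. If aᵢ ∧ aⱼ ≠ a₁ ∧ a₂ ∧ a₃, then aᵢ ∧ aⱼ is an atom of L; that is, the only element of L strictly below aᵢ ∧ aⱼ is a₁ ∧ a₂ ∧ a₃. -/

import Mathlib

/-!
The set `Ici p ∪ Iic q` of elements above `p` or below `q` is a sublattice. Taking `p = aᵢ ⊓ aⱼ`
and `q = aₖ`, it contains all three generators, hence is all of `L`: every `x < aᵢ ⊓ aⱼ` lies
below `aₖ`, so `x ≤ aᵢ ⊓ aⱼ ⊓ aₖ`, which is the least element of `L`.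
-/

/-- A set has exactly two elements. -/
def TwoElem {α : Type*} (s : Set α) : Prop := ∃ x y : α, x ≠ y ∧ s = {x, y}

/-- `a` is an atom of the lattice `L`: the principal ideal `↓a` has exactly two elements. -/
def IsAtomOf {L : Type*} [Lattice L] (a : L) : Prop := TwoElem (Set.Iic a)

/-- `G` generates the lattice `L`: `G` is contained in no proper sublattice. -/
def GeneratesLat {L : Type*} [Lattice L] (G : Set L) : Prop :=
  latticeClosure G = Set.univ

section Lattice

variable {L : Type*} [Lattice L]

lemma isSublattice_Ici (m : L) : IsSublattice (Set.Ici m) where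
  supClosed _ hu _ _ := le_sup_of_le_left hu
  infClosed _ hu _ hv := le_inf hu hv

lemma isSublattice_Ici_union_Iic (p q : L) : IsSublattice (Set.Ici p ∪ Set.Iic q) where
  supClosed := by
    rintro u (hu | hu) v (hv | hv)
    · exact Or.inl (le_sup_of_le_left hu)
    · exact Or.inl (le_sup_of_le_left hu)
    · exact Or.inl (le_sup_of_le_right hv)
    · exact Or.inr (sup_le hu hv)
  infClosed := by
    rintro u (hu | hu) v (hv | hv)
    · exact Or.inl (le_inf hu hv)
    · exact Or.inr (inf_le_of_right_le hv)
    · exact Or.inr (inf_le_of_left_le hu)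
    · exact Or.inr (inf_le_of_left_le hu)

lemma isAtomOf_of_forall_lt_eq {a m : L} (hma : m ≤ a) (hne : a ≠ m)
    (h : ∀ x < a, x = m) : IsAtomOf a := by
  refine ⟨a, m, hne, Set.ext fun x => ⟨fun hxa => ?_, ?_⟩⟩
  · exact hxa.eq_or_lt.imp id (h x)
  · rintro (rfl | rfl)
    exacts [le_rfl, hma]

namespace GeneratesLat

variable {G : Set L}

lemma mem_of_isSublattice (hgen : GeneratesLat G) {S : Set L} (hS : IsSublattice S)
    (hGS : G ⊆ S) (x : L) : x ∈ S :=
  latticeClosure_min hGS hS (hgen ▸ Set.mem_univ x)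

lemma le_of_forall_le (hgen : GeneratesLat G) {m : L} (hm : ∀ g ∈ G, m ≤ g) (x : L) :
    m ≤ x :=
  hgen.mem_of_isSublattice (isSublattice_Ici m) hm x

lemma le_inf_inf_of_lt_inf (hgen : GeneratesLat G) {b c d : L} (hG : G ⊆ {b, c, d})
    {x : L} (hx : x < b ⊓ c) : x ≤ b ⊓ c ⊓ d := by
  have hGS : G ⊆ Set.Ici (b ⊓ c) ∪ Set.Iic d := by
    intro g hg
    rcases hG hg with rfl | rfl | rfl
    exacts [Or.inl inf_le_left, Or.inl inf_le_right, Or.inr le_rfl]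
  have hxd : x ≤ d :=
    (hgen.mem_of_isSublattice (isSublattice_Ici_union_Iic _ _) hGS x).resolve_left hx.not_ge
  exact le_inf hx.le hxd

end GeneratesLat

end Lattice

theorem stmt_7_general {L : Type*} [Lattice L] (a : Fin 3 → L)
    (hgen : GeneratesLat (Set.range a))
    (i j k : Fin 3) (hijk : ({i, j, k} : Set (Fin 3)) = Set.univ)
    (hne : a i ⊓ a j ≠ a 0 ⊓ a 1 ⊓ a 2) :
    IsAtomOf (a i ⊓ a j) ∧
      ∀ x : L, x < a i ⊓ a j → x = a 0 ⊓ a 1 ⊓ a 2 := by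
  have hcover : ∀ t, t = i ∨ t = j ∨ t = k := fun t => by
    simpa using (hijk ▸ Set.mem_univ t : t ∈ ({i, j, k} : Set (Fin 3)))
  have hrange : Set.range a ⊆ {a i, a j, a k} := by
    rintro _ ⟨t, rfl⟩
    rcases hcover t with rfl | rfl | rfl <;> simp
  have hbot : ∀ x, a 0 ⊓ a 1 ⊓ a 2 ≤ x := hgen.le_of_forall_le <| by
    rintro _ ⟨t, rfl⟩
    fin_cases t <;> simp [inf_le_of_left_le]
  have hijk_le : a i ⊓ a j ⊓ a k ≤ a 0 ⊓ a 1 ⊓ a 2 := by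
    have h : ∀ t, a i ⊓ a j ⊓ a k ≤ a t := fun t => by
      rcases hcover t with rfl | rfl | rfl <;> simp [inf_le_of_left_le]
    exact le_inf (le_inf (h 0) (h 1)) (h 2)
  have hlt : ∀ x < a i ⊓ a j, x = a 0 ⊓ a 1 ⊓ a 2 := fun x hx =>
    le_antisymm ((hgen.le_inf_inf_of_lt_inf hrange hx).trans hijk_le) (hbot x)
  exact ⟨isAtomOf_of_forall_lt_eq (hbot _) hne hlt, hlt⟩

theorem stmt_7 {L : Type*} [Lattice L] (a : Fin 3 → L)
    (hthree : (Set.range a).ncard = 3)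
    (hgen : GeneratesLat (Set.range a))
    (i j k : Fin 3) (hijk : ({i, j, k} : Set (Fin 3)) = Set.univ)
    (hne : a i ⊓ a j ≠ a 0 ⊓ a 1 ⊓ a 2) :
    IsAtomOf (a i ⊓ a j) ∧
      ∀ x : L, x < a i ⊓ a j → x = a 0 ⊓ a 1 ⊓ a 2 :=
  stmt_7_general a hgen i j k hijk hne
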